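/- For a unilateral weighted shift S with positive bounded weights, the spectrum of S is the closed disc {λ ∈ ℂ : |λ| ≤ r(S)}, where r(S) is the spectral radius. -/

import Mathlib

/-!
If `z ≠ 0` is not in the spectrum, solving `z • x - S x = e k` coordinate by coordinate gives
`z ^ (n + 1) * ⟪e (k + n), x⟫ = ω k * ⋯ * ω (k + n - 1)`, so every product of `n` consecutive
weights is at most `‖(z - S)⁻¹‖ * ‖z‖ ^ (n + 1)`. These products control `‖S ^ n‖` through
Parseval's identity, whence `r(S) ≤ ‖z‖`. So the open disc of radius `r(S)` lies in the spectrum,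
as does `0` because `e 0` is not in the range of `S`, and closedness of the spectrum gives the
closed disc.
-/

open Filter

variable {H : Type*} [NormedAddCommGroup H] [InnerProductSpace ℂ H] [CompleteSpace H]

open Topology Finset
open scoped InnerProductSpace NNReal ENNReal

theorem le_of_forall_pow_le_mul_pow {x t C : ℝ} (ht : 0 ≤ t) (h : ∀ n : ℕ, x ^ n ≤ C * t ^ n) :
    x ≤ t := by
  by_contra! htx
  have hx : 0 < x := ht.trans_lt htx
  have hlim : Tendsto (fun n : ℕ => C * (t / x) ^ n) atTop (𝓝 0) := by
    simpa using (tendsto_pow_atTop_nhds_zero_of_lt_one (div_nonneg ht hx.le)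
      ((div_lt_one hx).2 htx)).const_mul C
  obtain ⟨n, hn⟩ := (hlim.eventually (gt_mem_nhds one_pos)).exists
  rw [div_pow, mul_div_assoc', div_lt_one (by positivity)] at hn
  exact (h n).not_gt hn

section SpectralRadius

variable {𝕜 A : Type*} [NormedField 𝕜] [NormedRing A] [NormedAlgebra 𝕜 A] [CompleteSpace A]

theorem spectralRadius_le_of_norm_pow_le {a : A} {C : ℝ} {t : ℝ≥0}
    (h : ∀ n, ‖a ^ n‖ ≤ C * t ^ n) : spectralRadius 𝕜 a ≤ t := by
  refine iSup₂_le fun k hk => ENNReal.coe_le_coe.2 ?_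
  refine le_of_forall_pow_le_mul_pow (C := C * ‖(1 : A)‖) t.2 fun n => ?_
  calc ‖k‖ ^ n = ‖k ^ n‖ := (norm_pow k n).symm
    _ ≤ ‖a ^ n‖ * ‖(1 : A)‖ := by
      simpa using spectrum.subset_closedBall_norm_mul (a ^ n) (spectrum.pow_mem_pow a n hk)
    _ ≤ C * t ^ n * ‖(1 : A)‖ := by gcongr; exact h n
    _ = C * ‖(1 : A)‖ * t ^ n := by ring

end SpectralRadius

theorem spectrum_eq_closedBall_of_spectralRadius_le_nnnorm {𝕜 A : Type*} [RCLike 𝕜]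
    [NormedRing A] [NormedAlgebra 𝕜 A] [CompleteSpace A] [NormOneClass A] {a : A}
    (h0 : (0 : 𝕜) ∈ spectrum 𝕜 a) (h : ∀ z ∉ spectrum 𝕜 a, spectralRadius 𝕜 a ≤ ‖z‖₊) :
    spectrum 𝕜 a = Metric.closedBall 0 (spectralRadius 𝕜 a).toReal := by
  have hr : spectralRadius 𝕜 a ≠ ⊤ :=
    ne_top_of_le_ne_top ENNReal.coe_ne_top (spectrum.spectralRadius_le_nnnorm a)
  have hball : Metric.ball 0 (spectralRadius 𝕜 a).toReal ⊆ spectrum 𝕜 a := fun z hz => by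
    by_contra hz'
    have := ENNReal.toReal_mono ENNReal.coe_ne_top (h z hz')
    rw [mem_ball_zero_iff] at hz
    rw [ENNReal.coe_toReal, coe_nnnorm] at this
    linarith
  refine subset_antisymm (fun z hz => ?_) ?_
  · simpa using ENNReal.toReal_mono hr (le_iSup₂ (α := ℝ≥0∞) z hz)
  · rcases eq_or_ne (spectralRadius 𝕜 a).toReal 0 with hr0 | hr0
    · simpa [hr0] using h0
    · rw [← closure_ball 0 hr0]
      exact (spectrum.isClosed a).closure_subset_iff.2 hball

section WeightedShift

variable {𝕜 E : Type*} [RCLike 𝕜] [NormedAddCommGroup E] [InnerProductSpace 𝕜 E]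

theorem HilbertBasis.hasSum_norm_inner_sq {ι : Type*} (b : HilbertBasis ι 𝕜 E) (x : E) :
    HasSum (fun i => ‖⟪b i, x⟫_𝕜‖ ^ 2) (‖x‖ ^ 2) := by
  simpa only [ENNReal.toReal_ofNat, Real.rpow_two, b.repr_apply_apply,
    LinearIsometryEquiv.norm_map] using lp.hasSum_norm (p := 2) (by norm_num) (b.repr x)

def IsWeightedShift (S : E →L[𝕜] E) (e : HilbertBasis ℕ 𝕜 E) (ω : ℕ → 𝕜) : Prop :=
  ∀ n, S (e n) = ω n • e (n + 1)

namespace IsWeightedShift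

variable {S : E →L[𝕜] E} {e : HilbertBasis ℕ 𝕜 E} {ω : ℕ → 𝕜}

theorem inner_apply_zero (hS : IsWeightedShift S e ω) (x : E) : ⟪e 0, S x⟫_𝕜 = 0 := by
  suffices (innerSL 𝕜 (e 0)).comp S = 0 from congr($this x)
  refine ContinuousLinearMap.ext_on
    (Submodule.dense_iff_topologicalClosure_eq_top.2 e.dense_span) ?_
  rintro _ ⟨i, rfl⟩
  simp [hS i, e.orthonormal.inner_eq_zero (Nat.succ_ne_zero i).symm]

theorem inner_succ_apply (hS : IsWeightedShift S e ω) (m : ℕ) (x : E) :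
    ⟪e (m + 1), S x⟫_𝕜 = ω m * ⟪e m, x⟫_𝕜 := by
  suffices (innerSL 𝕜 (e (m + 1))).comp S = ω m • innerSL 𝕜 (e m) from congr($this x)
  refine ContinuousLinearMap.ext_on
    (Submodule.dense_iff_topologicalClosure_eq_top.2 e.dense_span) ?_
  rintro _ ⟨i, rfl⟩
  classical
  simp +contextual [hS i, orthonormal_iff_ite.1 e.orthonormal]

theorem inner_pow_apply_of_lt (hS : IsWeightedShift S e ω) (x : E) :
    ∀ {m n : ℕ}, m < n → ⟪e m, (S ^ n) x⟫_𝕜 = 0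
  | 0, n + 1, _ => by rw [pow_succ', mul_apply_eq_comp, hS.inner_apply_zero]
  | m + 1, n + 1, h => by
    rw [pow_succ', mul_apply_eq_comp, hS.inner_succ_apply,
      hS.inner_pow_apply_of_lt x (by omega), mul_zero]

theorem inner_add_pow_apply (hS : IsWeightedShift S e ω) (x : E) (m n : ℕ) :
    ⟪e (m + n), (S ^ n) x⟫_𝕜 = (∏ j ∈ range n, ω (m + j)) * ⟪e m, x⟫_𝕜 := by
  induction n with
  | zero => simp
  | succ n ih =>
    rw [← add_assoc, pow_succ', mul_apply_eq_comp, hS.inner_succ_apply, ih,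
      prod_range_succ]
    ring

theorem norm_pow_le_of_norm_prod_le (hS : IsWeightedShift S e ω) {n : ℕ} {C : ℝ}
    (h : ∀ m, ‖∏ j ∈ range n, ω (m + j)‖ ≤ C) : ‖S ^ n‖ ≤ C := by
  have hC : 0 ≤ C := (norm_nonneg _).trans (h 0)
  refine ContinuousLinearMap.opNorm_le_bound _ hC fun x => ?_
  have hSx : HasSum (fun m => ‖⟪e (m + n), (S ^ n) x⟫_𝕜‖ ^ 2) (‖(S ^ n) x‖ ^ 2) := by
    have hinit : ∑ m ∈ range n, ‖⟪e m, (S ^ n) x⟫_𝕜‖ ^ 2 = 0 :=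
      sum_eq_zero fun m hm => by rw [hS.inner_pow_apply_of_lt x (mem_range.1 hm), norm_zero,
        zero_pow two_ne_zero]
    have h := (hasSum_nat_add_iff' n).2 (e.hasSum_norm_inner_sq ((S ^ n) x))
    rwa [hinit, sub_zero] at h
  have hsq : ‖(S ^ n) x‖ ^ 2 ≤ (C * ‖x‖) ^ 2 := by
    rw [mul_pow]
    refine hasSum_le (fun m => ?_) hSx ((e.hasSum_norm_inner_sq x).mul_left (C ^ 2))
    rw [hS.inner_add_pow_apply, norm_mul, mul_pow]
    gcongr
    exact h m
  exact (pow_le_pow_iff_left₀ (norm_nonneg _) (by positivity) two_ne_zero).1 hsq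

theorem zero_mem_spectrum (hS : IsWeightedShift S e ω) : (0 : 𝕜) ∈ spectrum 𝕜 S := by
  rw [spectrum.zero_mem_iff]
  rintro ⟨u, rfl⟩
  have h := hS.inner_apply_zero ((↑u⁻¹ : E →L[𝕜] E) (e 0))
  rw [← mul_apply_eq_comp, u.mul_inv, one_apply_eq_self,
    inner_self_eq_one_of_norm_eq_one (e.orthonormal.1 0)] at h
  exact one_ne_zero h

theorem inner_eq_zero_of_lt_of_smul_sub_apply_eq (hS : IsWeightedShift S e ω) {z : 𝕜}
    (hz : z ≠ 0) {x : E} {k : ℕ} (hx : z • x - S x = e k) : ∀ {m : ℕ}, m < k → ⟪e m, x⟫_𝕜 = 0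
  | 0, hk => by
    have h := congr(⟪e 0, $hx⟫_𝕜)
    rw [inner_sub_right, inner_smul_right, hS.inner_apply_zero, sub_zero,
      e.orthonormal.inner_eq_zero hk.ne] at h
    exact (mul_eq_zero.1 h).resolve_left hz
  | m + 1, hk => by
    have h := congr(⟪e (m + 1), $hx⟫_𝕜)
    rw [inner_sub_right, inner_smul_right, hS.inner_succ_apply,
      hS.inner_eq_zero_of_lt_of_smul_sub_apply_eq hz hx (show m < k by omega), mul_zero,
      sub_zero, e.orthonormal.inner_eq_zero hk.ne] at h
    exact (mul_eq_zero.1 h).resolve_left hz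

theorem pow_succ_mul_inner_add_eq_prod (hS : IsWeightedShift S e ω) {z : 𝕜} (hz : z ≠ 0)
    {x : E} {k : ℕ} (hx : z • x - S x = e k) (n : ℕ) :
    z ^ (n + 1) * ⟪e (k + n), x⟫_𝕜 = ∏ j ∈ range n, ω (k + j) := by
  induction n with
  | zero =>
    have h := congr(⟪e k, $hx⟫_𝕜)
    have hSx : ⟪e k, S x⟫_𝕜 = 0 := by
      cases k with
      | zero => exact hS.inner_apply_zero x
      | succ k =>
        rw [hS.inner_succ_apply,
          hS.inner_eq_zero_of_lt_of_smul_sub_apply_eq hz hx k.lt_succ_self, mul_zero]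
    rw [inner_sub_right, inner_smul_right, hSx, sub_zero,
      inner_self_eq_one_of_norm_eq_one (e.orthonormal.1 k)] at h
    simpa using h
  | succ n ih =>
    have h := congr(⟪e (k + n + 1), $hx⟫_𝕜)
    rw [inner_sub_right, inner_smul_right, hS.inner_succ_apply,
      e.orthonormal.inner_eq_zero (by omega), sub_eq_zero] at h
    rw [prod_range_succ, ← ih, ← add_assoc, pow_succ, mul_assoc, h]
    ring

theorem norm_prod_le_of_notMem_spectrum (hS : IsWeightedShift S e ω) {z : 𝕜}
    (hz : z ∉ spectrum 𝕜 S) (hz0 : z ≠ 0) (n k : ℕ) :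
    ‖∏ j ∈ range n, ω (k + j)‖ ≤ ‖resolvent S z‖ * ‖z‖ ^ (n + 1) := by
  have hR : (algebraMap 𝕜 (E →L[𝕜] E) z - S) * resolvent S z = 1 :=
    Ring.mul_inverse_cancel _ (spectrum.notMem_iff.1 hz)
  set x := resolvent S z (e k)
  have hx : z • x - S x = e k := by
    simpa [Algebra.algebraMap_eq_smul_one] using congr($hR (e k))
  have hx_le : ‖⟪e (k + n), x⟫_𝕜‖ ≤ ‖resolvent S z‖ :=
    calc ‖⟪e (k + n), x⟫_𝕜‖ ≤ ‖e (k + n)‖ * ‖x‖ := norm_inner_le_norm _ _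
      _ ≤ 1 * (‖resolvent S z‖ * ‖e k‖) := by
        rw [e.orthonormal.1]; gcongr; exact (resolvent S z).le_opNorm _
      _ = ‖resolvent S z‖ := by rw [e.orthonormal.1, one_mul, mul_one]
  rw [← hS.pow_succ_mul_inner_add_eq_prod hz0 hx n, norm_mul, norm_pow, mul_comm]
  gcongr

theorem spectralRadius_le_of_notMem_spectrum [CompleteSpace E] (hS : IsWeightedShift S e ω)
    {z : 𝕜} (hz : z ∉ spectrum 𝕜 S) : spectralRadius 𝕜 S ≤ ‖z‖₊ := by
  have hz0 : z ≠ 0 := by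
    rintro rfl
    exact hz hS.zero_mem_spectrum
  refine spectralRadius_le_of_norm_pow_le (C := ‖resolvent S z‖ * ‖z‖) fun n =>
    hS.norm_pow_le_of_norm_prod_le fun k => ?_
  calc _ ≤ ‖resolvent S z‖ * ‖z‖ ^ (n + 1) := hS.norm_prod_le_of_notMem_spectrum hz hz0 n k
    _ = _ := by rw [coe_nnnorm]; ring

end IsWeightedShift

end WeightedShift

theorem spectrum_weighted_shift_eq_closedBall_general (S : H →L[ℂ] H)
    (e : HilbertBasis ℕ ℂ H) (ω : ℕ → ℝ)
    (hS : ∀ n, S (e n) = (ω n : ℂ) • e (n + 1)) :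
    spectrum ℂ S = Metric.closedBall (0 : ℂ) (spectralRadius ℂ S).toReal := by
  have hS : IsWeightedShift S e (fun n => (ω n : ℂ)) := hS
  have : Nontrivial H := ⟨e 0, 0, e.orthonormal.ne_zero 0⟩
  exact spectrum_eq_closedBall_of_spectralRadius_le_nnnorm hS.zero_mem_spectrum
    fun _ hz => hS.spectralRadius_le_of_notMem_spectrum hz

/-- The spectrum of a unilateral weighted shift with positive bounded weights is the
closed disc of radius the spectral radius. -/
theorem spectrum_weighted_shift_eq_closedBall (S : H →L[ℂ] H)
    (e : HilbertBasis ℕ ℂ H) (ω : ℕ → ℝ) (hpos : ∀ n, 0 < ω n)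
    (hbd : ∃ M : ℝ, ∀ n, ω n ≤ M)
    (hS : ∀ n, S (e n) = (ω n : ℂ) • e (n + 1)) :
    spectrum ℂ S = Metric.closedBall (0 : ℂ) (spectralRadius ℂ S).toReal :=
  spectrum_weighted_shift_eq_closedBall_general S e ω hS
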